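/- Let $\mathcal{G} = \mathfrak{sl}_n(\mathbb{C}) \otimes \mathbb{C}[\lambda,\lambda^{-1}]$ with the form $\langle x\otimes\lambda^j, y\otimes\lambda^k\rangle = \mathrm{tr}(xy)\,\delta_{j,-k}$, and let $n_+ = (\bar{n}_+ \otimes 1) \oplus (\mathfrak{sl}_n \otimes \lambda\mathbb{C}[\lambda])$, where $\bar{n}_+$ is the strictly upper triangular matrices. Let $I = \sum_{i=1}^{n-1} f_i + \bar{e}_0 \otimes \lambda^{-1}$, where $f_i = E_{i+1,i}$ and $\bar{e}_0 = E_{1,n}$. Then $\langle I, [X, Y]\rangle = 0$ for all $X, Y \in n_+$. -/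

import Mathlib

/-
Pairing with `I` only sees the constant terms on the first superdiagonal and the `λ`-coefficient
of the bottom-left corner. For `X, Y ∈ n₊` the constant term of `XY` is a product of two strictly
upper triangular matrices, so it vanishes on and just above the diagonal; the `λ`-coefficient of
`XY` is `X₀Y₁ + X₁Y₀`, whose bottom-left corner vanishes because `X₀` has zero last row and `Y₀`
has zero first column. Hence `⟨I, XY⟩ = 0` already for all `X, Y ∈ n₊`.
-/

open LaurentPolynomial

/-- The Toda moment value `I = Σ_{i=1}^{n-1} E_{i+1,i} + λ⁻¹ E_{1,n}` in the loop algebra of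
`𝔰𝔩_n(ℂ)` (realized as traceless `n × n` matrices over Laurent polynomials). -/
noncomputable def todaMoment (n : ℕ) : Matrix (Fin n) (Fin n) ℂ[T;T⁻¹] :=
  Matrix.of fun i j =>
    if (i : ℕ) = (j : ℕ) + 1 then 1
    else if (i : ℕ) = 0 ∧ (j : ℕ) = n - 1 then T (-1)
    else 0

namespace LaurentPolynomial

variable {R : Type*} [Semiring R] {p q : R[T;T⁻¹]}

theorem finset_sum_coeff {ι : Type*} (s : Finset ι) (f : ι → R[T;T⁻¹]) (m : ℤ) :
    (∑ i ∈ s, f i).coeff m = ∑ i ∈ s, (f i).coeff m := by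
  rw [AddMonoidAlgebra.coeff_sum, Finsupp.finsetSum_apply]

theorem coeff_T_mul (n m : ℤ) (p : R[T;T⁻¹]) : (T n * p).coeff m = p.coeff (m - n) := by
  rw [T, AddMonoidAlgebra.coeff_single_mul_apply, one_mul, neg_add_eq_sub]

theorem coeff_mul_eq_sum_Icc_of_nonneg (hp : ∀ k < 0, p.coeff k = 0)
    (hq : ∀ k < 0, q.coeff k = 0) (m : ℤ) :
    (p * q).coeff m = ∑ i ∈ Finset.Icc 0 m, p.coeff i * q.coeff (m - i) := by
  have hsupport : ∀ i, p.coeff i * q.coeff (m - i) ≠ 0 →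
      i ∈ p.coeff.support ∧ i ∈ Finset.Icc 0 m := by
    intro i hi
    refine ⟨Finsupp.mem_support_iff.2 (left_ne_zero_of_mul hi), Finset.mem_Icc.2 ⟨?_, ?_⟩⟩
    · by_contra! h
      exact hi (by rw [hp i h, zero_mul])
    · by_contra! h
      exact hi (by rw [hq (m - i) (by omega), mul_zero])
  simp only [AddMonoidAlgebra.coeff_mul_apply_left, Finsupp.sum, neg_add_eq_sub]
  rw [← finsum_eq_sum_of_support_subset _ fun i hi => (hsupport i hi).1,
    finsum_eq_sum_of_support_subset _ fun i hi => (hsupport i hi).2]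

theorem coeff_zero_mul_of_nonneg (hp : ∀ k < 0, p.coeff k = 0) (hq : ∀ k < 0, q.coeff k = 0) :
    (p * q).coeff 0 = p.coeff 0 * q.coeff 0 := by
  simp [coeff_mul_eq_sum_Icc_of_nonneg hp hq]

theorem coeff_one_mul_of_nonneg (hp : ∀ k < 0, p.coeff k = 0) (hq : ∀ k < 0, q.coeff k = 0) :
    (p * q).coeff 1 = p.coeff 0 * q.coeff 1 + p.coeff 1 * q.coeff 0 := by
  rw [coeff_mul_eq_sum_Icc_of_nonneg hp hq, show Finset.Icc (0 : ℤ) 1 = {0, 1} by decide,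
    Finset.sum_pair zero_ne_one, sub_zero, sub_self]

end LaurentPolynomial

namespace Matrix

variable {R : Type*} [Semiring R] {n : ℕ}

/-- The subalgebra `n₊` of the loop algebra of `𝔤𝔩_n`. -/
structure IsNPlus (X : Matrix (Fin n) (Fin n) R[T;T⁻¹]) : Prop where
  coeff_neg : ∀ i j (k : ℤ), k < 0 → (X i j).coeff k = 0
  coeff_zero_of_le : ∀ i j, j ≤ i → (X i j).coeff 0 = 0

variable {A B : Matrix (Fin n) (Fin n) R[T;T⁻¹]}

theorem IsNPlus.coeff_zero_mul_apply (hA : A.IsNPlus) (hB : B.IsNPlus) {c a : Fin n}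
    (hca : (a : ℕ) ≤ c + 1) : ((A * B) c a).coeff 0 = 0 := by
  rw [mul_apply, finset_sum_coeff]
  refine Finset.sum_eq_zero fun k _ => ?_
  rw [coeff_zero_mul_of_nonneg (hA.coeff_neg c k) (hB.coeff_neg k a)]
  rcases le_or_gt k c with hkc | hck
  · rw [hA.coeff_zero_of_le c k hkc, zero_mul]
  · rw [hB.coeff_zero_of_le k a (Fin.le_def.2 (by omega)), mul_zero]

theorem IsNPlus.coeff_one_mul_apply (hA : A.IsNPlus) (hB : B.IsNPlus) {c a : Fin n}
    (hc : IsTop c) (ha : IsBot a) : ((A * B) c a).coeff 1 = 0 := by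
  rw [mul_apply, finset_sum_coeff]
  refine Finset.sum_eq_zero fun k _ => ?_
  rw [coeff_one_mul_of_nonneg (hA.coeff_neg c k) (hB.coeff_neg k a),
    hA.coeff_zero_of_le c k (hc k), hB.coeff_zero_of_le k a (ha k), zero_mul, mul_zero, zero_add]

theorem coeff_zero_trace_todaMoment_mul_eq_zero (M : Matrix (Fin n) (Fin n) ℂ[T;T⁻¹])
    (hsuper : ∀ c a : Fin n, (a : ℕ) = c + 1 → (M c a).coeff 0 = 0)
    (hcorner : ∀ c a : Fin n, IsTop c → IsBot a → (M c a).coeff 1 = 0) :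
    (trace (todaMoment n * M)).coeff 0 = 0 := by
  simp only [trace, diag_apply, mul_apply, finset_sum_coeff]
  refine Finset.sum_eq_zero fun a _ => Finset.sum_eq_zero fun c _ => ?_
  simp only [todaMoment, of_apply]
  split_ifs with hsub hcor
  · rw [one_mul, hsuper c a hsub]
  · have hc : IsTop c := fun k => Fin.le_def.2 (by omega)
    have ha : IsBot a := fun k => Fin.le_def.2 (by omega)
    rw [coeff_T_mul, zero_sub, neg_neg, hcorner c a hc ha]
  · rw [zero_mul, AddMonoidAlgebra.coeff_zero, Finsupp.zero_apply]

theorem IsNPlus.coeff_zero_trace_todaMoment_mul_mul {X Y : Matrix (Fin n) (Fin n) ℂ[T;T⁻¹]}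
    (hX : X.IsNPlus) (hY : Y.IsNPlus) : (trace (todaMoment n * (X * Y))).coeff 0 = 0 :=
  coeff_zero_trace_todaMoment_mul_eq_zero _ (fun _ _ h => hX.coeff_zero_mul_apply hY h.le)
    fun _ _ hc ha => hX.coeff_one_mul_apply hY hc ha

end Matrix

open Matrix

theorem toda_moment_isotropic_on_nplus_general (n : ℕ)
    (X Y : Matrix (Fin n) (Fin n) ℂ[T;T⁻¹])
    (hXpos : ∀ (i j : Fin n) (k : ℤ), k < 0 → (X i j).coeff k = 0)
    (hYpos : ∀ (i j : Fin n) (k : ℤ), k < 0 → (Y i j).coeff k = 0)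
    (hX0 : ∀ i j : Fin n, j ≤ i → (X i j).coeff 0 = 0)
    (hY0 : ∀ i j : Fin n, j ≤ i → (Y i j).coeff 0 = 0) :
    (Matrix.trace (todaMoment n * (X * Y - Y * X))).coeff 0 = 0 := by
  have hX : X.IsNPlus := ⟨hXpos, hX0⟩
  have hY : Y.IsNPlus := ⟨hYpos, hY0⟩
  rw [mul_sub, trace_sub, AddMonoidAlgebra.coeff_sub, Finsupp.sub_apply,
    hX.coeff_zero_trace_todaMoment_mul_mul hY, hY.coeff_zero_trace_todaMoment_mul_mul hX, sub_zero]

/-- Lemma 3 of the paper for `𝔰𝔩_n`: the moment value `I` vanishes on `[n₊, n₊]` under the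
pairing `⟨A,B⟩ = (tr(AB))₀` (constant Laurent coefficient of the trace).  Here `X ∈ n₊`
means: `X` is a traceless matrix of Laurent polynomials all of whose coefficients in
negative degrees vanish and whose constant term is strictly upper triangular. -/
theorem toda_moment_isotropic_on_nplus (n : ℕ) (hn : 2 ≤ n)
    (X Y : Matrix (Fin n) (Fin n) ℂ[T;T⁻¹])
    (hXsl : Matrix.trace X = 0) (hYsl : Matrix.trace Y = 0)
    (hXpos : ∀ (i j : Fin n) (k : ℤ), k < 0 → (X i j).coeff k = 0)
    (hYpos : ∀ (i j : Fin n) (k : ℤ), k < 0 → (Y i j).coeff k = 0)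
    (hX0 : ∀ i j : Fin n, j ≤ i → (X i j).coeff 0 = 0)
    (hY0 : ∀ i j : Fin n, j ≤ i → (Y i j).coeff 0 = 0) :
    (Matrix.trace (todaMoment n * (X * Y - Y * X))).coeff 0 = 0 :=
  toda_moment_isotropic_on_nplus_general n X Y hXpos hYpos hX0 hY0
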